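/- The spectral gap τ₀ = 2 min{Im λ : λ ∈ σ(F), Im λ > 0} for the Kramers–Fokker–Planck Hamilton map equals (√(1-4a) - 1)/2 when a < 0, equals (1 - √(1-4a))/2 when 0 < a ≤ 1/4, and equals 1/2 when a > 1/4. -/

import Mathlib

/-!
The characteristic polynomial of `F` factors as
`256 det (F - l) = ((4l - i)² - (4a - 1)) ((4l + i)² - (4a - 1))`,
so every eigenvalue has the form `4l = ±i + w` with `w² = 4a - 1`, a real number. Such a `w`
has `|Im w| = √(1 - 4a)` (which is `0` when `a > 1/4`), so `4 Im l ∈ {±1 ± √(1 - 4a)}` and the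
least positive imaginary part is `|1 - √(1 - 4a)| / 4`; it is positive because `a ≠ 0`.
-/

open Complex

/-- The Hamilton map of the Kramers–Fokker–Planck quadratic symbol
`q(x,v,ξ,η) = η² + v²/4 + i(vξ - a x η)`. -/
noncomputable def KFPHamiltonMap (a : ℝ) : Matrix (Fin 4) (Fin 4) ℂ :=
  !![0, I / 2, 0, 0;
     -(a : ℂ) * I / 2, 0, 0, 1;
     0, 0, 0, (a : ℂ) * I / 2;
     0, -1 / 4, -I / 2, 0]

open Matrix

theorem Matrix.exists_mulVec_eq_smul_iff_det_sub_eq_zero {n R : Type*} [Fintype n]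
    [DecidableEq n] [CommRing R] [IsDomain R] (A : Matrix n n R) (l : R) :
    (∃ v ≠ 0, A *ᵥ v = l • v) ↔ (A - l • 1).det = 0 := by
  simp only [← exists_mulVec_eq_zero_iff, sub_mulVec, smul_mulVec, one_mulVec, sub_eq_zero]

namespace Complex

theorem abs_im_eq_sqrt_neg_of_sq_eq_ofReal {z : ℂ} {c : ℝ} (h : z ^ 2 = c) :
    |z.im| = √(-c) := by
  have hre : z.re ^ 2 - z.im ^ 2 = c := by simpa [sq] using congrArg re h
  have him : z.re * z.im = 0 := by
    have := congrArg im h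
    simp only [sq, mul_im, ofReal_im] at this
    linarith
  rcases mul_eq_zero.1 him with hre0 | him0
  · rw [← Real.sqrt_sq_eq_abs]
    congr 1
    rw [hre0] at hre
    linarith
  · rw [him0, abs_zero, eq_comm, Real.sqrt_eq_zero']
    nlinarith

theorem exists_sq_eq_ofReal_im_eq_sqrt_neg (c : ℝ) : ∃ z : ℂ, z ^ 2 = c ∧ z.im = √(-c) := by
  rcases le_or_gt 0 c with hc | hc
  · refine ⟨√c, ?_, ?_⟩
    · rw [← ofReal_pow, Real.sq_sqrt hc]
    · rw [ofReal_im, eq_comm, Real.sqrt_eq_zero']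
      linarith
  · refine ⟨√(-c) * I, ?_, by simp⟩
    rw [mul_pow, I_sq, ← ofReal_pow, Real.sq_sqrt (by linarith)]
    push_cast
    ring

end Complex

namespace KFPHamiltonMap

theorem det_sub_smul_one (a : ℝ) (l : ℂ) :
    (KFPHamiltonMap a - l • 1).det =
      ((4 * l - I) ^ 2 - (4 * a - 1)) * ((4 * l + I) ^ 2 - (4 * a - 1)) / 256 := by
  simp [KFPHamiltonMap, Matrix.det_succ_row_zero, Fin.sum_univ_succ, Fin.succAbove,
    Matrix.one_apply]
  ring_nf
  simp only [I_sq, I_pow_four]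
  ring


theorem exists_mulVec_eq_smul_iff (a : ℝ) (l : ℂ) :
    (∃ v : Fin 4 → ℂ, v ≠ 0 ∧ (KFPHamiltonMap a).mulVec v = l • v) ↔
      (4 * l - I) ^ 2 = (4 * a - 1 : ℝ) ∨ (4 * l + I) ^ 2 = (4 * a - 1 : ℝ) := by
  rw [exists_mulVec_eq_smul_iff_det_sub_eq_zero, det_sub_smul_one]
  push_cast
  simp only [div_eq_zero_iff, mul_eq_zero, sub_eq_zero, OfNat.ofNat_ne_zero, or_false]

theorem abs_one_sub_sqrt_le_four_mul_im (a : ℝ) {l : ℂ}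
    (hl : ∃ v : Fin 4 → ℂ, v ≠ 0 ∧ (KFPHamiltonMap a).mulVec v = l • v) (hpos : 0 < l.im) :
    |1 - √(1 - 4 * a)| ≤ 4 * l.im := by
  have hs := Real.sqrt_nonneg (1 - 4 * a)
  rw [exists_mulVec_eq_smul_iff] at hl
  rcases hl with h | h <;>
  · have him := abs_im_eq_sqrt_neg_of_sq_eq_ofReal h
    simp only [neg_sub, sub_im, add_im, mul_im, I_im, re_ofNat, im_ofNat, zero_mul,
      add_zero] at him
    rw [abs_le]
    constructor <;> cases abs_cases (4 * l.im - 1) <;> cases abs_cases (4 * l.im + 1) <;>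
      linarith

-- `-l` is an eigenvalue whenever `l` is, so either sign of `1 - √(1 - 4a)` is attained.
theorem exists_four_mul_im_eq_abs_one_sub_sqrt (a : ℝ) :
    ∃ l : ℂ, (∃ v : Fin 4 → ℂ, v ≠ 0 ∧ (KFPHamiltonMap a).mulVec v = l • v) ∧
      4 * l.im = |1 - √(1 - 4 * a)| := by
  obtain ⟨w, hw, hwim⟩ := exists_sq_eq_ofReal_im_eq_sqrt_neg (4 * a - 1)
  rw [neg_sub] at hwim
  simp_rw [exists_mulVec_eq_smul_iff]
  rcases le_total (√(1 - 4 * a)) 1 with hs | hs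
  · refine ⟨(I - w) / 4, Or.inl ?_, ?_⟩
    · rw [← hw]; ring
    · rw [abs_of_nonneg (by linarith)]; simp only [div_ofNat_im, sub_im, I_im, hwim]; ring
  · refine ⟨(w - I) / 4, Or.inr ?_, ?_⟩
    · rw [← hw]; ring
    · rw [abs_of_nonpos (by linarith)]; simp only [div_ofNat_im, sub_im, I_im, hwim]; ring

theorem isLeast_im_eigenvalues (a : ℝ) (ha : a ≠ 0) :
    IsLeast {t : ℝ | ∃ l : ℂ, (∃ v : Fin 4 → ℂ, v ≠ 0 ∧
        (KFPHamiltonMap a).mulVec v = l • v) ∧ 0 < l.im ∧ t = l.im}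
      (|1 - √(1 - 4 * a)| / 4) := by
  obtain ⟨l, hl, him⟩ := exists_four_mul_im_eq_abs_one_sub_sqrt a
  have hs : √(1 - 4 * a) ≠ 1 := fun h => ha (by linarith [Real.sqrt_eq_one.1 h])
  have hpos : 0 < |1 - √(1 - 4 * a)| := abs_pos.2 (sub_ne_zero.2 hs.symm)
  refine ⟨⟨l, hl, by linarith, by linarith⟩, ?_⟩
  rintro _ ⟨l', hl', hpos', rfl⟩
  linarith [abs_one_sub_sqrt_le_four_mul_im a hl' hpos']

end KFPHamiltonMap

/-- The spectral gap `τ₀ = 2 min{Im λ : λ ∈ σ(F), Im λ > 0}` of the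
Kramers–Fokker–Planck Hamilton map equals `(√(1-4a) - 1)/2` for `a < 0`,
`(1 - √(1-4a))/2` for `0 < a ≤ 1/4`, and `1/2` for `a > 1/4`. -/
theorem KFP_spectral_gap (a : ℝ) (ha : a ≠ 0)
    (τ₀ : ℝ)
    (hτ₀ : τ₀ = 2 * sInf {t : ℝ | ∃ l : ℂ, (∃ v : Fin 4 → ℂ, v ≠ 0 ∧
        (KFPHamiltonMap a).mulVec v = l • v) ∧ 0 < l.im ∧ t = l.im}) :
    (a < 0 → τ₀ = (Real.sqrt (1 - 4 * a) - 1) / 2) ∧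
    (0 < a ∧ a ≤ 1 / 4 → τ₀ = (1 - Real.sqrt (1 - 4 * a)) / 2) ∧
    (1 / 4 < a → τ₀ = 1 / 2) := by
  have hgap : τ₀ = |1 - √(1 - 4 * a)| / 2 := by
    rw [hτ₀, (KFPHamiltonMap.isLeast_im_eigenvalues a ha).csInf_eq]
    ring
  refine ⟨fun hneg => ?_, fun ⟨hpos, _⟩ => ?_, fun hgt => ?_⟩
  · have : 1 < √(1 - 4 * a) := Real.lt_sqrt_of_sq_lt (by linarith)
    rw [hgap, abs_of_neg (by linarith)]
    ring
  · have : √(1 - 4 * a) < 1 := (Real.sqrt_lt' one_pos).2 (by linarith)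
    rw [hgap, abs_of_pos (by linarith)]
  · rw [hgap, Real.sqrt_eq_zero'.2 (by linarith)]
    norm_num
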